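/- A Boolean state x ∈ {0,1}^n has no outgoing transitions in the partial J-most-permissive dynamics of f if and only if f(x) = x. In particular the asynchronous dynamics and every partial m.p. dynamics of f have the same fixed points among Boolean states. -/

import Mathlib

/-- Activity levels of the most permissive scheme: 0, 1, increasing, decreasing. -/
inductive MPLevel : Type
  | zero | one | inc | dec
deriving DecidableEq

/-- The set γ(x̂) of Boolean states compatible with an m.p. state x̂. -/
def mpGamma {n : ℕ} (x : Fin n → MPLevel) : Set (Fin n → Bool) :=
  {x' | ∀ j, (x j = MPLevel.zero → x' j = false) ∧ (x j = MPLevel.one → x' j = true)}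

/-- The set α(x) of Boolean states compatible with a multivalued state x. -/
def mvAlpha {n : ℕ} (m x : Fin n → ℕ) : Set (Fin n → Bool) :=
  {x' | ∀ j, (x j = 0 → x' j = false) ∧ (x j = m j → x' j = true)}

/-- Coordinatewise embedding of Boolean states into m.p. states. -/
def embBM {n : ℕ} (x : Fin n → Bool) : Fin n → MPLevel :=
  fun j => if x j then MPLevel.one else MPLevel.zero

/-- Embedding of a Boolean state into X = ∏ {0,…,m_j}, sending 1 to m_j. -/
def embX {n : ℕ} (m : Fin n → ℕ) (x : Fin n → Bool) : Fin n → ℕ :=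
  fun j => if x j then m j else 0

/-- Transition of the most permissive dynamics of f at coordinate j0. -/
def mpTransAt {n : ℕ} (f : (Fin n → Bool) → Fin n → Bool) (j0 : Fin n)
    (x y : Fin n → MPLevel) : Prop :=
  (∀ j, j ≠ j0 → y j = x j) ∧
    (((x j0 = MPLevel.zero ∨ x j0 = MPLevel.dec) ∧ (∃ x' ∈ mpGamma x, f x' j0 = true) ∧ y j0 = MPLevel.inc) ∨
     ((x j0 = MPLevel.one ∨ x j0 = MPLevel.inc) ∧ (∃ x' ∈ mpGamma x, f x' j0 = false) ∧ y j0 = MPLevel.dec) ∨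
     (x j0 = MPLevel.inc ∧ y j0 = MPLevel.one) ∨
     (x j0 = MPLevel.dec ∧ y j0 = MPLevel.zero))

/-- Transition of the most permissive dynamics of f. -/
def mpTrans {n : ℕ} (f : (Fin n → Bool) → Fin n → Bool) (x y : Fin n → MPLevel) : Prop :=
  ∃ j0, mpTransAt f j0 x y

/-- Transition of the partial J-most-permissive dynamics of f at coordinate j0. -/
def pmpTransAt {n : ℕ} (J : Set (Fin n)) (f : (Fin n → Bool) → Fin n → Bool) (j0 : Fin n)
    (x y : Fin n → MPLevel) : Prop :=
  (∀ j, j ≠ j0 → y j = x j) ∧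
    (((x j0 = MPLevel.zero ∨ x j0 = MPLevel.dec) ∧ (∃ x' ∈ mpGamma x, f x' j0 = true) ∧ y j0 = MPLevel.inc) ∨
     ((x j0 = MPLevel.one ∨ x j0 = MPLevel.inc) ∧ (∃ x' ∈ mpGamma x, f x' j0 = false) ∧ y j0 = MPLevel.dec) ∨
     (x j0 = MPLevel.inc ∧ y j0 = MPLevel.one) ∨
     (x j0 = MPLevel.dec ∧ y j0 = MPLevel.zero) ∨
     (j0 ∉ J ∧ x j0 = MPLevel.zero ∧ (∃ x' ∈ mpGamma x, f x' j0 = true) ∧ y j0 = MPLevel.one) ∨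
     (j0 ∉ J ∧ x j0 = MPLevel.one ∧ (∃ x' ∈ mpGamma x, f x' j0 = false) ∧ y j0 = MPLevel.zero))

/-- Transition of the partial J-most-permissive dynamics of f. -/
def pmpTrans {n : ℕ} (J : Set (Fin n)) (f : (Fin n → Bool) → Fin n → Bool)
    (x y : Fin n → MPLevel) : Prop :=
  ∃ j0, pmpTransAt J f j0 x y

/-- A state of X_{J m.p.}: coordinates outside J are Boolean. -/
def inXJ {n : ℕ} (J : Set (Fin n)) (x : Fin n → MPLevel) : Prop :=
  ∀ j, j ∉ J → (x j = MPLevel.zero ∨ x j = MPLevel.one)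

/-- Asynchronous transition of a Boolean model f. -/
def asyncTransB {n : ℕ} (f : (Fin n → Bool) → Fin n → Bool) (x y : Fin n → Bool) : Prop :=
  ∃ j0, f x j0 ≠ x j0 ∧ y j0 = f x j0 ∧ ∀ j, j ≠ j0 → y j = x j

/-- Asynchronous transition of a multivalued model h (one coordinate moves by 1 toward its target). -/
def asyncTrans {n : ℕ} (h : (Fin n → ℕ) → Fin n → ℕ) (x y : Fin n → ℕ) : Prop :=
  ∃ j0, h x j0 ≠ x j0 ∧ (∀ j, j ≠ j0 → y j = x j) ∧
    ((x j0 < h x j0 ∧ y j0 = x j0 + 1) ∨ (h x j0 < x j0 ∧ y j0 = x j0 - 1))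

/-- An m.p. state x̂ is compatible with a multivalued state x. -/
def mpCompat {n : ℕ} (m x : Fin n → ℕ) (xh : Fin n → MPLevel) : Prop :=
  ∀ j, (x j = 0 → xh j = MPLevel.zero) ∧ (x j = m j → xh j = MPLevel.one) ∧
    (0 < x j → x j < m j → (xh j = MPLevel.inc ∨ xh j = MPLevel.dec))

/-- h is a multivalued model on X = ∏ {0,…,m_j}: maps X to X, moving each coordinate by at most 1. -/
def isMVModel {n : ℕ} (m : Fin n → ℕ) (h : (Fin n → ℕ) → Fin n → ℕ) : Prop :=
  ∀ x, (∀ j, x j ≤ m j) → ∀ j, h x j ≤ m j ∧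
    (h x j = x j ∨ h x j = x j + 1 ∨ h x j + 1 = x j)

/-- h is a multivalued refinement of the Boolean model f. -/
def isRefinement {n : ℕ} (m : Fin n → ℕ) (f : (Fin n → Bool) → Fin n → Bool)
    (h : (Fin n → ℕ) → Fin n → ℕ) : Prop :=
  ∀ x, (∀ j, x j ≤ m j) → ∀ j,
    (h x j < x j → ∃ x' ∈ mvAlpha m x, f x' j = false ∧ x' j = true) ∧
    (x j < h x j → ∃ x' ∈ mvAlpha m x, f x' j = true ∧ x' j = false)

/-- A literal in a DNF: a regulator index, a polarity, and a threshold (used in the multivalued reading). -/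
structure Lit (n : ℕ) where
  idx : Fin n
  pos : Bool
  thr : ℕ

/-- Boolean evaluation of a literal (threshold ignored). -/
def evalLitB {n : ℕ} (x : Fin n → Bool) (l : Lit n) : Bool :=
  if l.pos then x l.idx else !(x l.idx)

/-- Multivalued evaluation of a literal: x_idx ≥ thr+1 for a positive literal, x_idx < thr+1 otherwise. -/
def evalLitM {n : ℕ} (x : Fin n → ℕ) (l : Lit n) : Bool :=
  if l.pos then decide (l.thr + 1 ≤ x l.idx) else decide (x l.idx < l.thr + 1)

/-- Boolean evaluation of a DNF (list of conjunctive clauses). -/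
def evalDNFB {n : ℕ} (x : Fin n → Bool) (φ : List (List (Lit n))) : Bool :=
  φ.any fun c => c.all (evalLitB x)

/-- Multivalued evaluation of a DNF via the thresholds. -/
def evalDNFM {n : ℕ} (x : Fin n → ℕ) (φ : List (List (Lit n))) : Bool :=
  φ.any fun c => c.all (evalLitM x)

/-- Refinement built from the DNF threshold parameterisation:
h_j(x) = max(0, min(m_j, x_j + H_j(x))) with H_j(x) = +1 iff the multivalued DNF of f_j is true. -/
def hDNF {n : ℕ} (m : Fin n → ℕ) (φ : Fin n → List (List (Lit n)))
    (x : Fin n → ℕ) : Fin n → ℕ :=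
  fun j => if evalDNFM x (φ j) then min (m j) (x j + 1) else x j - 1

theorem mpGamma_embBM {n : ℕ} (x : Fin n → Bool) : mpGamma (embBM x) = {x} := by
  ext x'
  simp only [mpGamma, embBM, Set.mem_ofPred_eq, Set.mem_singleton_iff, funext_iff]
  refine forall_congr' fun j => ?_
  cases x j <;> cases x' j <;> simp

@[simp]
theorem embBM_eq_zero_iff {n : ℕ} {x : Fin n → Bool} {j : Fin n} :
    embBM x j = MPLevel.zero ↔ x j = false := by
  cases h : x j <;> simp [embBM, h]

@[simp]
theorem embBM_eq_one_iff {n : ℕ} {x : Fin n → Bool} {j : Fin n} :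
    embBM x j = MPLevel.one ↔ x j = true := by
  cases h : x j <;> simp [embBM, h]

@[simp]
theorem embBM_ne_inc {n : ℕ} (x : Fin n → Bool) (j : Fin n) : embBM x j ≠ MPLevel.inc := by
  cases h : x j <;> simp [embBM, h]

@[simp]
theorem embBM_ne_dec {n : ℕ} (x : Fin n → Bool) (j : Fin n) : embBM x j ≠ MPLevel.dec := by
  cases h : x j <;> simp [embBM, h]

theorem ne_of_pmpTransAt_embBM {n : ℕ} {J : Set (Fin n)} {f : (Fin n → Bool) → Fin n → Bool}
    {x : Fin n → Bool} {j : Fin n} {y : Fin n → MPLevel} (h : pmpTransAt J f j (embBM x) y) :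
    f x j ≠ x j := by
  obtain ⟨-, h⟩ := h
  simp only [mpGamma_embBM, Set.mem_singleton_iff, exists_eq_left] at h
  cases hx : x j <;> cases hf : f x j <;> simp_all

theorem pmpTransAt_embBM_update {n : ℕ} (J : Set (Fin n)) {f : (Fin n → Bool) → Fin n → Bool}
    {x : Fin n → Bool} {j : Fin n} (h : f x j ≠ x j) :
    pmpTransAt J f j (embBM x)
      (Function.update (embBM x) j (if x j then MPLevel.dec else MPLevel.inc)) := by
  refine ⟨fun k hk => Function.update_of_ne hk _ _, ?_⟩
  simp only [mpGamma_embBM, Set.mem_singleton_iff, exists_eq_left, Function.update_self]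
  cases hx : x j <;> cases hf : f x j <;> simp_all

theorem exists_pmpTrans_embBM_iff {n : ℕ} (J : Set (Fin n)) (f : (Fin n → Bool) → Fin n → Bool)
    (x : Fin n → Bool) : (∃ y, pmpTrans J f (embBM x) y) ↔ f x ≠ x := by
  rw [Function.ne_iff]
  constructor
  · rintro ⟨y, j, hj⟩
    exact ⟨j, ne_of_pmpTransAt_embBM hj⟩
  · rintro ⟨j, hj⟩
    exact ⟨_, j, pmpTransAt_embBM_update J hj⟩

theorem exists_asyncTransB_iff {n : ℕ} (f : (Fin n → Bool) → Fin n → Bool) (x : Fin n → Bool) :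
    (∃ y, asyncTransB f x y) ↔ f x ≠ x := by
  rw [Function.ne_iff]
  constructor
  · rintro ⟨y, j, hj, -⟩
    exact ⟨j, hj⟩
  · rintro ⟨j, hj⟩
    exact ⟨Function.update x j (f x j), j, hj, Function.update_self _ _ _,
      fun k hk => Function.update_of_ne hk _ _⟩

/-- a Boolean state x has no outgoing transition in the partial J-m.p. dynamics
of f iff f(x) = x; in particular the asynchronous dynamics and every partial m.p. dynamics
have the same fixed points among Boolean states. -/
theorem pmp_fixed_points {n : ℕ} (f : (Fin n → Bool) → Fin n → Bool) (J : Set (Fin n))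
    (x : Fin n → Bool) :
    ((∀ y : Fin n → MPLevel, ¬ pmpTrans J f (embBM x) y) ↔ f x = x) ∧
    ((∀ y : Fin n → Bool, ¬ asyncTransB f x y) ↔ f x = x) := by
  simp only [← not_exists, exists_pmpTrans_embBM_iff, exists_asyncTransB_iff, not_not, and_self]
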